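/- Bounded differences property of the supremum of trimmed deviations. Let G be a (countable) family of classifiers, α ∈ (0,1), and let Z(ξ_1,…,ξ_n) = sup_{g∈G} ( R_α(g) − R_{n,α}(g)(ξ_1,…,ξ_n) ). If two samples (ξ_1,…,ξ_n) and (ξ'_1,…,ξ'_n) in {0,1}×ℝ^p differ only in their i-th coordinate, then |Z(ξ_1,…,ξ_n) − Z(ξ'_1,…,ξ'_n)| ≤ 1/(n(1−α)). -/

import Mathlib

open MeasureTheory

noncomputable section

/-- The classification error `R(g) = P({(y,x) : g(x) ≠ y})`. -/
def classErr {p : ℕ} (P : Measure (Bool × (Fin p → ℝ))) (g : (Fin p → ℝ) → Bool) : ℝ :=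
  (P {z | g z.2 ≠ z.1}).toReal

/-- Trimmed classification error `R_α(g) = (R(g) − α)_+ / (1 − α)`. -/
def trimmedErr {p : ℕ} (P : Measure (Bool × (Fin p → ℝ))) (α : ℝ)
    (g : (Fin p → ℝ) → Bool) : ℝ :=
  max (classErr P g - α) 0 / (1 - α)

/-- Admissible trimming weight vectors: `0 ≤ w_i ≤ 1/(n(1-α))` and `Σ w_i = 1`. -/
def weightSet (n : ℕ) (α : ℝ) : Set (Fin n → ℝ) :=
  {w | (∀ i, 0 ≤ w i ∧ w i ≤ 1 / (n * (1 - α))) ∧ ∑ i, w i = 1}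

/-- Empirical trimmed classification error
`R_{n,α}(g) = min_{w} Σ_i w_i 1{g(X_i) ≠ Y_i}`. -/
def empTrimmedErr {p : ℕ} (n : ℕ) (α : ℝ) (ξ : Fin n → Bool × (Fin p → ℝ))
    (g : (Fin p → ℝ) → Bool) : ℝ :=
  sInf ((fun w => ∑ i, w i * (if g (ξ i).2 ≠ (ξ i).1 then (1 : ℝ) else 0)) ''
    weightSet n α)

/-! Changing the `i`-th observation changes every weighted empirical loss `Σ_j w_j 1{g(X_j) ≠ Y_j}`
by at most `w_i ≤ 1/(n(1-α))`, so the same holds for their infimum `R_{n,α}(g)`, and then for the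
supremum over `g` of `R_α(g) - R_{n,α}(g)`: infima and suprema of real families are 1-Lipschitz for
the sup distance. In `ℝ` this last fact survives the junk values `sSup s = 0` and `sInf s = 0` of
unbounded sets, since two families at bounded distance are unbounded together. -/

section ImageBounds

variable {ι β : Type*} {s : Set ι} {f g : ι → β} {c : β}

lemma bddAbove_image_of_le_add [Preorder β] [Add β] [AddRightMono β] (hf : BddAbove (f '' s))
    (hgf : ∀ x ∈ s, g x ≤ f x + c) : BddAbove (g '' s) := by
  obtain ⟨b, hb⟩ := hf
  refine ⟨b + c, ?_⟩
  rintro _ ⟨x, hx, rfl⟩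
  exact (hgf x hx).trans (add_le_add_left (hb (Set.mem_image_of_mem f hx)) c)

lemma sSup_image_le_sSup_image_add [ConditionallyCompleteLattice β] [Add β] [AddRightMono β]
    (hs : s.Nonempty) (hg : BddAbove (g '' s)) (hfg : ∀ x ∈ s, f x ≤ g x + c) :
    sSup (f '' s) ≤ sSup (g '' s) + c := by
  refine csSup_le (hs.image f) ?_
  rintro _ ⟨x, hx, rfl⟩
  exact (hfg x hx).trans (add_le_add_left (le_csSup hg (Set.mem_image_of_mem g hx)) c)

end ImageBounds

namespace Real

variable {ι : Type*} {s : Set ι} {f g : ι → ℝ} {c : ℝ}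

lemma abs_sSup_image_sub_sSup_image_le (hc : 0 ≤ c) (hfg : ∀ x ∈ s, |f x - g x| ≤ c) :
    |sSup (f '' s) - sSup (g '' s)| ≤ c := by
  rcases s.eq_empty_or_nonempty with rfl | hs
  · simpa using hc
  have hle : ∀ x ∈ s, f x ≤ g x + c ∧ g x ≤ f x + c := fun x hx => by
    have := abs_sub_le_iff.1 (hfg x hx)
    constructor <;> linarith
  by_cases hf : BddAbove (f '' s)
  · have hg := bddAbove_image_of_le_add hf fun x hx => (hle x hx).2
    rw [abs_sub_le_iff]
    constructor
    · linarith [sSup_image_le_sSup_image_add hs hg fun x hx => (hle x hx).1]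
    · linarith [sSup_image_le_sSup_image_add hs hf fun x hx => (hle x hx).2]
  · have hg : ¬BddAbove (g '' s) := fun hg => hf (bddAbove_image_of_le_add hg fun x hx => (hle x hx).1)
    simpa [sSup_of_not_bddAbove hf, sSup_of_not_bddAbove hg] using hc

lemma abs_sInf_image_sub_sInf_image_le (hc : 0 ≤ c) (hfg : ∀ x ∈ s, |f x - g x| ≤ c) :
    |sInf (f '' s) - sInf (g '' s)| ≤ c := by
  have hneg : ∀ h : ι → ℝ, sInf (h '' s) = -sSup ((fun x => -h x) '' s) := fun h => by
    rw [sInf_def, ← Set.image_neg_eq_neg, Set.image_image]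
  rw [hneg f, hneg g, neg_sub_neg, abs_sub_comm]
  exact abs_sSup_image_sub_sSup_image_le hc fun x hx => by
    rw [neg_sub_neg, abs_sub_comm]
    exact hfg x hx

end Real

lemma Fintype.sum_mul_sub_sum_mul_eq_single {ι R : Type*} [Fintype ι] [CommRing R]
    (w a b : ι → R) (i : ι) (hab : ∀ j, j ≠ i → a j = b j) :
    ∑ j, w j * a j - ∑ j, w j * b j = w i * (a i - b i) := by
  rw [← Finset.sum_sub_distrib, Fintype.sum_eq_single i fun j hj => by rw [hab j hj, sub_self]]
  ring

lemma one_div_mul_one_sub_nonneg (n : ℕ) {α : ℝ} (hα : α ≤ 1) : 0 ≤ 1 / (n * (1 - α)) :=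
  one_div_nonneg.2 (mul_nonneg n.cast_nonneg (sub_nonneg.2 hα))

lemma abs_empTrimmedErr_sub_le {p n : ℕ} {α : ℝ} (hα : α ≤ 1) (i : Fin n)
    {ξ ξ' : Fin n → Bool × (Fin p → ℝ)} (hdiff : ∀ j, j ≠ i → ξ j = ξ' j)
    (g : (Fin p → ℝ) → Bool) :
    |empTrimmedErr n α ξ g - empTrimmedErr n α ξ' g| ≤ 1 / (n * (1 - α)) := by
  refine Real.abs_sInf_image_sub_sInf_image_le (one_div_mul_one_sub_nonneg n hα) fun w hw => ?_
  obtain ⟨hw_nonneg, hw_le⟩ := hw.1 i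
  rw [Fintype.sum_mul_sub_sum_mul_eq_single _ _ _ i fun j hj => by rw [hdiff j hj],
    abs_mul, abs_of_nonneg hw_nonneg]
  have hloss : |(if g (ξ i).2 ≠ (ξ i).1 then (1 : ℝ) else 0) -
      (if g (ξ' i).2 ≠ (ξ' i).1 then (1 : ℝ) else 0)| ≤ 1 := by
    split_ifs <;> norm_num
  calc w i * _ ≤ w i * 1 := mul_le_mul_of_nonneg_left hloss hw_nonneg
    _ ≤ 1 / (n * (1 - α)) := by rwa [mul_one]

theorem sup_trimmed_deviation_bounded_differences_general {p : ℕ}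
    (P : Measure (Bool × (Fin p → ℝ)))
    (G : Set ((Fin p → ℝ) → Bool))
    {α : ℝ} (hα : α ∈ Set.Ioo (0 : ℝ) 1)
    {n : ℕ} (i : Fin n)
    (ξ ξ' : Fin n → Bool × (Fin p → ℝ))
    (hdiff : ∀ j, j ≠ i → ξ j = ξ' j) :
    |sSup ((fun g => trimmedErr P α g - empTrimmedErr n α ξ g) '' G) -
        sSup ((fun g => trimmedErr P α g - empTrimmedErr n α ξ' g) '' G)| ≤
      1 / (n * (1 - α)) := by
  refine Real.abs_sSup_image_sub_sSup_image_le (one_div_mul_one_sub_nonneg n hα.2.le)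
    fun g _ => ?_
  rw [sub_sub_sub_cancel_left, abs_sub_comm]
  exact abs_empTrimmedErr_sub_le hα.2.le i hdiff g

/-- Bounded differences property of the supremum of trimmed deviations
`Z(ξ) = sup_{g ∈ G} (R_α(g) − R_{n,α}(g)(ξ))`: changing one observation changes `Z`
by at most `1/(n(1−α))`. -/
theorem sup_trimmed_deviation_bounded_differences {p : ℕ}
    (P : Measure (Bool × (Fin p → ℝ))) [IsProbabilityMeasure P]
    (G : Set ((Fin p → ℝ) → Bool)) (hGc : G.Countable)
    (hGmeas : ∀ g ∈ G, Measurable g)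
    {α : ℝ} (hα : α ∈ Set.Ioo (0 : ℝ) 1)
    {n : ℕ} (hn : 0 < n) (i : Fin n)
    (ξ ξ' : Fin n → Bool × (Fin p → ℝ))
    (hdiff : ∀ j, j ≠ i → ξ j = ξ' j) :
    |sSup ((fun g => trimmedErr P α g - empTrimmedErr n α ξ g) '' G) -
        sSup ((fun g => trimmedErr P α g - empTrimmedErr n α ξ' g) '' G)| ≤
      1 / (n * (1 - α)) :=
  sup_trimmed_deviation_bounded_differences_general P G hα i ξ ξ' hdiff

end
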